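/- Let M be an n-dimensional (N(k),ξ)-semi-Riemannian manifold. If 𝒯_a is the quasi-conformal curvature tensor 𝒞_* (with a₁ ≠ 0 and a₀+(n−2)a₁ ≠ 0), the ℳ-projective curvature tensor ℳ, or the 𝒲₂-curvature tensor, then M is ξ-𝒯_a-flat if and only if M is Einstein. -/

import Mathlib

open Finset

/-- An algebraic (pointwise) model of an `n`-dimensional semi-Riemannian manifold:
a real vector space of tangent vectors together with a metric `g`, an orthonormal
frame `e` with signs `eps`, and a Riemann curvature tensor `R` satisfying the
standard curvature symmetries.  The Ricci tensor `S`, the Ricci operator `Q` and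
the scalar curvature `r` are obtained by tracing with respect to the frame. -/
structure SemiRiemannian (n : ℕ) where
  V : Type
  [instAddCommGroup : AddCommGroup V]
  [instModule : Module ℝ V]
  g : V → V → ℝ
  g_symm : ∀ X Y, g X Y = g Y X
  g_add_left : ∀ X Y Z, g (X + Y) Z = g X Z + g Y Z
  g_smul_left : ∀ (c : ℝ) (X Y : V), g (c • X) Y = c * g X Y
  e : Fin n → V
  eps : Fin n → ℝ
  eps_unit : ∀ i, eps i = 1 ∨ eps i = -1
  g_frame : ∀ i j, g (e i) (e j) = if i = j then eps i else 0
  expand : ∀ X : V, X = ∑ i, (eps i * g X (e i)) • e i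
  R : V → V → V → V
  R_add₁ : ∀ X X' Y Z, R (X + X') Y Z = R X Y Z + R X' Y Z
  R_smul₁ : ∀ (c : ℝ) (X Y Z : V), R (c • X) Y Z = c • R X Y Z
  R_add₂ : ∀ X Y Y' Z, R X (Y + Y') Z = R X Y Z + R X Y' Z
  R_smul₂ : ∀ (c : ℝ) (X Y Z : V), R X (c • Y) Z = c • R X Y Z
  R_add₃ : ∀ X Y Z Z', R X Y (Z + Z') = R X Y Z + R X Y Z'
  R_smul₃ : ∀ (c : ℝ) (X Y Z : V), R X Y (c • Z) = c • R X Y Z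
  R_alt : ∀ X Y Z, R X Y Z = - R Y X Z
  R_skew : ∀ X Y Z W, g (R X Y Z) W = - (g (R X Y W) Z)
  R_pair : ∀ X Y Z W, g (R X Y Z) W = g (R Z W X) Y
  R_bianchi : ∀ X Y Z, R X Y Z + R Y Z X + R Z X Y = 0

attribute [instance] SemiRiemannian.instAddCommGroup SemiRiemannian.instModule

namespace SemiRiemannian

variable {n : ℕ} (M : SemiRiemannian n)

/-- The Ricci tensor `S`. -/
def S (X Y : M.V) : ℝ := ∑ i, M.eps i * M.g (M.R (M.e i) X Y) (M.e i)

/-- The Ricci operator `Q`, characterised by `g (Q X) Y = S X Y`. -/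
def Q (X : M.V) : M.V := ∑ i, (M.eps i * M.S X (M.e i)) • M.e i

/-- The scalar curvature `r`. -/
def r : ℝ := ∑ i, M.eps i * M.S (M.e i) (M.e i)

/-- The `𝒯`-curvature tensor with coefficients `a₀, …, a₇`:
`𝒯(X,Y)Z = a₀ R(X,Y)Z + a₁ S(Y,Z)X + a₂ S(X,Z)Y + a₃ S(X,Y)Z + a₄ g(Y,Z)QX
  + a₅ g(X,Z)QY + a₆ g(X,Y)QZ + a₇ r (g(Y,Z)X − g(X,Z)Y)`. -/
def T (a₀ a₁ a₂ a₃ a₄ a₅ a₆ a₇ : ℝ) (X Y Z : M.V) : M.V :=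
  a₀ • M.R X Y Z + (a₁ * M.S Y Z) • X + (a₂ * M.S X Z) • Y + (a₃ * M.S X Y) • Z
    + (a₄ * M.g Y Z) • M.Q X + (a₅ * M.g X Z) • M.Q Y + (a₆ * M.g X Y) • M.Q Z
    + (a₇ * M.r) • (M.g Y Z • X - M.g X Z • Y)

/-- The Ricci tensor `S_𝒯` of the `𝒯`-curvature tensor. -/
def ST (a₀ a₁ a₂ a₃ a₄ a₅ a₆ a₇ : ℝ) (X Y : M.V) : ℝ :=
  (a₀ + (n : ℝ) * a₁ + a₂ + a₃ + a₅ + a₆) * M.S X Y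
    + (a₄ + ((n : ℝ) - 1) * a₇) * M.r * M.g X Y

/-- `ξ` belongs to the `k`-nullity distribution `N(k)`:
`R(X,Y)ξ = k (g(Y,ξ)X − g(X,ξ)Y)`. -/
def Nullity (k : ℝ) (ξ : M.V) : Prop :=
  ∀ X Y : M.V, M.R X Y ξ = k • (M.g Y ξ • X - M.g X ξ • Y)

/-- `𝒯_a`-semisymmetry: `R(X,Y) ⬝ 𝒯_a = 0`, where `R(X,Y)` acts as a derivation
on the `(1,3)`-tensor `𝒯_a`. -/
def TSemisymmetric (a₀ a₁ a₂ a₃ a₄ a₅ a₆ a₇ : ℝ) : Prop :=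
  ∀ X Y U V W : M.V,
    M.R X Y (M.T a₀ a₁ a₂ a₃ a₄ a₅ a₆ a₇ U V W)
      - M.T a₀ a₁ a₂ a₃ a₄ a₅ a₆ a₇ (M.R X Y U) V W
      - M.T a₀ a₁ a₂ a₃ a₄ a₅ a₆ a₇ U (M.R X Y V) W
      - M.T a₀ a₁ a₂ a₃ a₄ a₅ a₆ a₇ U V (M.R X Y W) = 0

end SemiRiemannian


/-!
All three tensors have `a₂ = -a₁`, `a₅ = -a₄`, `a₃ = a₆ = 0`. For such a tensor the nullity condition
gives `T(X,Y)ξ = g(Y,ξ) B X - g(X,ξ) B Y` with `B = c + a₄ Q`, `c = a₀k + a₁k(n-1) + a₇r`, and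
`B ξ = μ ξ` with `μ = c + a₄k(n-1)`. Hence ξ-flatness says `ε B X = g(X,ξ) μ ξ`. Tracing this gives
`(a₄ + (n-1)a₇)(r - n(n-1)k) = 0` once `a₀ + (n-1)(a₁+a₄) + n(n-1)a₇ = 0`, i.e. once `μ` vanishes at
`r = n(n-1)k`; so `μ = 0` and `a₄ S = -c g`. Conversely an Einstein `N(k)`-manifold has
`S = k(n-1) g` and `r = n(n-1)k`, so `B = μ · id = 0`. In dimension `0` there is no unit `ξ`, and in
dimension `1` the curvature vanishes.
-/

namespace SemiRiemannian

variable {n : ℕ} (M : SemiRiemannian n)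

def IsEinstein : Prop := ∃ α : ℝ, ∀ X Y : M.V, M.S X Y = α * M.g X Y

lemma g_zero_left (Y : M.V) : M.g 0 Y = 0 := by
  simpa using M.g_smul_left 0 Y Y

lemma g_neg_left (X Y : M.V) : M.g (-X) Y = -M.g X Y := by
  simpa using M.g_smul_left (-1) X Y

lemma g_sub_left (X Y Z : M.V) : M.g (X - Y) Z = M.g X Z - M.g Y Z := by
  rw [sub_eq_add_neg, M.g_add_left, M.g_neg_left, sub_eq_add_neg]

lemma g_sum_left {ι : Type*} (s : Finset ι) (f : ι → M.V) (Y : M.V) :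
    M.g (∑ i ∈ s, f i) Y = ∑ i ∈ s, M.g (f i) Y := by
  classical
  induction s using Finset.induction with
  | empty => simp [M.g_zero_left]
  | insert _ _ h ih => rw [sum_insert h, sum_insert h, M.g_add_left, ih]

lemma g_frame_self (i : Fin n) : M.g (M.e i) (M.e i) = M.eps i := by
  simp [M.g_frame]

lemma sum_eps_mul_g_frame_self : ∑ i, M.eps i * M.g (M.e i) (M.e i) = n := by
  have h (i : Fin n) : M.eps i * M.g (M.e i) (M.e i) = 1 := by
    rw [M.g_frame_self]
    rcases M.eps_unit i with h | h <;> rw [h] <;> norm_num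
  simp [h]

lemma sum_eps_mul_g_mul_g (X Y : M.V) :
    ∑ i, M.eps i * (M.g X (M.e i) * M.g Y (M.e i)) = M.g X Y := by
  conv_rhs => rw [M.expand X, M.g_sum_left]
  refine sum_congr rfl fun i _ => ?_
  rw [M.g_smul_left, M.g_symm (M.e i) Y]
  ring

lemma R_self (X Z : M.V) : M.R X X Z = 0 := by
  have h := M.R_alt X X Z
  have h2 : (2 : ℝ) • M.R X X Z = 0 := by
    rw [two_smul]
    nth_rewrite 1 [h]
    exact neg_add_cancel _
  simpa using h2

lemma S_symm (X Y : M.V) : M.S X Y = M.S Y X := by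
  refine sum_congr rfl fun i _ => ?_
  rw [M.R_pair, M.R_skew, M.R_alt, M.g_neg_left, neg_neg]

lemma S_add_right (X Y Z : M.V) : M.S X (Y + Z) = M.S X Y + M.S X Z := by
  simp only [S, M.R_add₃, M.g_add_left, mul_add, sum_add_distrib]

lemma S_smul_right (c : ℝ) (X Y : M.V) : M.S X (c • Y) = c * M.S X Y := by
  simp only [S, M.R_smul₃, M.g_smul_left, mul_sum]
  exact sum_congr rfl fun i _ => by ring

lemma S_sum_right {ι : Type*} (s : Finset ι) (X : M.V) (f : ι → M.V) :
    M.S X (∑ i ∈ s, f i) = ∑ i ∈ s, M.S X (f i) := by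
  classical
  induction s using Finset.induction with
  | empty => simpa using M.S_smul_right 0 X 0
  | insert _ _ h ih => rw [sum_insert h, sum_insert h, M.S_add_right, ih]

lemma g_Q (X Y : M.V) : M.g (M.Q X) Y = M.S X Y := by
  conv_rhs => rw [M.expand Y, M.S_sum_right]
  rw [Q, M.g_sum_left]
  refine sum_congr rfl fun i _ => ?_
  rw [M.g_smul_left, M.S_smul_right, M.g_symm (M.e i) Y]
  ring

section Einstein

variable {M} {α : ℝ} (hE : ∀ X Y : M.V, M.S X Y = α * M.g X Y)
include hE

lemma r_eq_of_S_eq_mul_g : M.r = n * α := by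
  calc M.r = α * ∑ i, M.eps i * M.g (M.e i) (M.e i) := by
        rw [r, mul_sum]
        exact sum_congr rfl fun i _ => by rw [hE]; ring
    _ = n * α := by rw [M.sum_eps_mul_g_frame_self, mul_comm]

lemma Q_eq_smul_of_S_eq_mul_g (Z : M.V) : M.Q Z = α • Z := by
  conv_rhs => rw [M.expand Z, smul_sum]
  refine sum_congr rfl fun i _ => ?_
  rw [hE, smul_smul]
  ring_nf

end Einstein

lemma eq_zero_of_dim_zero (M : SemiRiemannian 0) (X : M.V) : X = 0 := by
  simpa using M.expand X

lemma R_eq_zero_of_dim_one (M : SemiRiemannian 1) (X Y Z : M.V) : M.R X Y Z = 0 := by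
  rw [M.expand X, M.expand Y]
  simp [M.R_smul₁, M.R_smul₂, M.R_self]

section FlatSpace

variable (hR : ∀ X Y Z : M.V, M.R X Y Z = 0)
include hR

lemma S_eq_zero_of_R_eq_zero (X Y : M.V) : M.S X Y = 0 := by
  simp [S, hR, M.g_zero_left]

lemma isEinstein_of_R_eq_zero : M.IsEinstein :=
  ⟨0, fun X Y => by rw [M.S_eq_zero_of_R_eq_zero hR, zero_mul]⟩

lemma T_eq_zero_of_R_eq_zero (a₀ a₁ a₂ a₃ a₄ a₅ a₆ a₇ : ℝ) (X Y Z : M.V) :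
    M.T a₀ a₁ a₂ a₃ a₄ a₅ a₆ a₇ X Y Z = 0 := by
  have hS := M.S_eq_zero_of_R_eq_zero hR
  simp [T, Q, r, hR, hS]

end FlatSpace

end SemiRiemannian

namespace SemiRiemannian.Nullity

variable {n : ℕ} {M : SemiRiemannian n} {k : ℝ} {ξ : M.V} (hk : M.Nullity k ξ)
include hk

lemma S_apply_right (X : M.V) : M.S X ξ = k * (n - 1) * M.g X ξ := by
  have hterm (i : Fin n) : M.eps i * M.g (M.R (M.e i) X ξ) (M.e i)
      = k * M.g X ξ * (M.eps i * M.g (M.e i) (M.e i))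
        - k * (M.eps i * (M.g ξ (M.e i) * M.g X (M.e i))) := by
    rw [hk, M.g_smul_left, M.g_sub_left, M.g_smul_left, M.g_smul_left, M.g_symm (M.e i) ξ]
    ring
  rw [S, sum_congr rfl fun i _ => hterm i, sum_sub_distrib, ← mul_sum, ← mul_sum,
    M.sum_eps_mul_g_frame_self, M.sum_eps_mul_g_mul_g, M.g_symm ξ X]
  ring

lemma Q_apply_self : M.Q ξ = (k * (n - 1)) • ξ := by
  conv_rhs => rw [M.expand ξ, smul_sum]
  refine sum_congr rfl fun i _ => ?_
  rw [M.S_symm, hk.S_apply_right, smul_smul, M.g_symm (M.e i) ξ]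
  ring_nf

variable (a₀ a₁ a₄ a₇ : ℝ)

lemma T_apply (X Y : M.V) :
    M.T a₀ a₁ (-a₁) 0 a₄ (-a₄) 0 a₇ X Y ξ =
      M.g Y ξ • ((a₀ * k + a₁ * (k * (n - 1)) + a₇ * M.r) • X + a₄ • M.Q X)
        - M.g X ξ • ((a₀ * k + a₁ * (k * (n - 1)) + a₇ * M.r) • Y + a₄ • M.Q Y) := by
  rw [T, hk, hk.S_apply_right, hk.S_apply_right]
  module

variable {a₀ a₁ a₄ a₇} {ε : ℝ} (hξ : M.g ξ ξ = ε)
include hξ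

lemma S_identity_of_T_apply_eq_zero {X : M.V} (h : M.T a₀ a₁ (-a₁) 0 a₄ (-a₄) 0 a₇ X ξ ξ = 0)
    (W : M.V) :
    ε * ((a₀ * k + a₁ * (k * (n - 1)) + a₇ * M.r) * M.g X W + a₄ * M.S X W)
      = (a₀ * k + (a₁ + a₄) * (k * (n - 1)) + a₇ * M.r) * (M.g X ξ * M.g ξ W) := by
  have hW := congrArg (M.g · W) h
  simp only [hk.T_apply, hk.Q_apply_self, M.g_sub_left, M.g_smul_left,
    M.g_add_left, M.g_Q, hξ, M.g_zero_left] at hW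
  linear_combination hW

lemma trace_identity_of_T_apply_eq_zero (hε : ε ≠ 0)
    (h : ∀ X : M.V, M.T a₀ a₁ (-a₁) 0 a₄ (-a₄) 0 a₇ X ξ ξ = 0) :
    (a₀ * k + a₁ * (k * (n - 1)) + a₇ * M.r) * n + a₄ * M.r
      = a₀ * k + (a₁ + a₄) * (k * (n - 1)) + a₇ * M.r := by
  set c := a₀ * k + a₁ * (k * (n - 1)) + a₇ * M.r
  set μ := a₀ * k + (a₁ + a₄) * (k * (n - 1)) + a₇ * M.r
  have htrace : ε * (c * n + a₄ * M.r) = ε * μ :=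
    calc ε * (c * n + a₄ * M.r)
        = ∑ i, M.eps i * (ε * (c * M.g (M.e i) (M.e i) + a₄ * M.S (M.e i) (M.e i))) := by
          rw [← M.sum_eps_mul_g_frame_self, r, mul_sum, mul_sum, ← sum_add_distrib, mul_sum]
          exact sum_congr rfl fun i _ => by ring
      _ = ∑ i, M.eps i * (μ * (M.g (M.e i) ξ * M.g ξ (M.e i))) :=
          sum_congr rfl fun i _ => by rw [hk.S_identity_of_T_apply_eq_zero hξ (h (M.e i))]
      _ = μ * ∑ i, M.eps i * (M.g ξ (M.e i) * M.g ξ (M.e i)) := by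
          rw [mul_sum]
          exact sum_congr rfl fun i _ => by rw [M.g_symm (M.e i) ξ]; ring
      _ = ε * μ := by rw [M.sum_eps_mul_g_mul_g, hξ, mul_comm]
  exact mul_left_cancel₀ hε htrace

variable (hε : ε ≠ 0) (hsum : a₀ + (n - 1) * (a₁ + a₄) + n * (n - 1) * a₇ = 0)
include hε hsum

lemma r_eq_of_xi_flat (hr : a₄ + (n - 1) * a₇ ≠ 0)
    (h : ∀ X Y : M.V, M.T a₀ a₁ (-a₁) 0 a₄ (-a₄) 0 a₇ X Y ξ = 0) : M.r = n * (n - 1) * k := by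
  have htrace := hk.trace_identity_of_T_apply_eq_zero hξ hε fun X => h X ξ
  have hfac : (a₄ + (n - 1) * a₇) * (M.r - n * (n - 1) * k) = 0 := by
    linear_combination htrace - (n - 1) * k * hsum
  exact sub_eq_zero.mp ((mul_eq_zero.mp hfac).resolve_left hr)

lemma isEinstein_of_xi_flat (ha₄ : a₄ ≠ 0) (hr : a₄ + (n - 1) * a₇ ≠ 0)
    (h : ∀ X Y : M.V, M.T a₀ a₁ (-a₁) 0 a₄ (-a₄) 0 a₇ X Y ξ = 0) : M.IsEinstein := by
  have hrN := hk.r_eq_of_xi_flat hξ hε hsum hr h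
  have hμ : a₀ * k + (a₁ + a₄) * (k * (n - 1)) + a₇ * M.r = 0 := by
    linear_combination k * hsum + a₇ * hrN
  refine ⟨-(a₀ * k + a₁ * (k * (n - 1)) + a₇ * M.r) / a₄, fun X Y => ?_⟩
  have hXY := hk.S_identity_of_T_apply_eq_zero hξ (h X ξ) Y
  rw [hμ, zero_mul, mul_eq_zero, or_iff_right hε] at hXY
  field_simp
  linear_combination hXY

lemma xi_flat_of_isEinstein (hE : M.IsEinstein) (X Y : M.V) :
    M.T a₀ a₁ (-a₁) 0 a₄ (-a₄) 0 a₇ X Y ξ = 0 := by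
  obtain ⟨α, hE⟩ := hE
  have hα : α = k * (n - 1) := by
    have h := hk.S_apply_right ξ
    rw [hE, hξ] at h
    exact mul_right_cancel₀ hε (by linear_combination h)
  have hB (Z : M.V) :
      (a₀ * k + a₁ * (k * (n - 1)) + a₇ * M.r) • Z + a₄ • M.Q Z = 0 := by
    rw [Q_eq_smul_of_S_eq_mul_g hE, smul_smul, ← add_smul, r_eq_of_S_eq_mul_g hE, hα]
    exact smul_eq_zero_of_left (by linear_combination k * hsum) Z
  rw [hk.T_apply, hB, hB, smul_zero, smul_zero, sub_zero]

theorem xi_flat_iff_isEinstein {a₂ a₅ : ℝ} (h₂ : a₂ = -a₁) (h₅ : a₅ = -a₄) (ha₄ : a₄ ≠ 0)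
    (hr : a₄ + (n - 1) * a₇ ≠ 0) :
    (∀ X Y : M.V, M.T a₀ a₁ a₂ 0 a₄ a₅ 0 a₇ X Y ξ = 0) ↔ M.IsEinstein := by
  subst h₂ h₅
  exact ⟨hk.isEinstein_of_xi_flat hξ hε hsum ha₄ hr,
    fun hE => hk.xi_flat_of_isEinstein hξ hε hsum hE⟩

end SemiRiemannian.Nullity

theorem xi_Ta_flat_iff_Einstein_general
    (n : ℕ) (M : SemiRiemannian n) (k ε : ℝ) (ξ : M.V)
    (hε : ε = 1 ∨ ε = -1) (hξ : M.g ξ ξ = ε)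
    (hk : M.Nullity k ξ) :
    (∀ b₀ b₁ : ℝ, b₁ ≠ 0 → b₀ + ((n : ℝ) - 2) * b₁ ≠ 0 →
      ((∀ X Y : M.V,
          M.T b₀ b₁ (-b₁) 0 b₁ (-b₁) 0 (-((1/(n : ℝ)) * (b₀/((n : ℝ) - 1) + 2*b₁))) X Y ξ = 0)
        ↔ (∃ α : ℝ, ∀ X Y : M.V, M.S X Y = α * M.g X Y)))
    ∧ ((∀ X Y : M.V, M.T 1 (-(1/(2*((n : ℝ) - 1)))) (1/(2*((n : ℝ) - 1))) 0 (-(1/(2*((n : ℝ) - 1)))) (1/(2*((n : ℝ) - 1))) 0 0 X Y ξ = 0)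
        ↔ (∃ α : ℝ, ∀ X Y : M.V, M.S X Y = α * M.g X Y))
    ∧ ((∀ X Y : M.V, M.T 1 0 0 0 (-(1/((n : ℝ) - 1))) (1/((n : ℝ) - 1)) 0 0 X Y ξ = 0)
        ↔ (∃ α : ℝ, ∀ X Y : M.V, M.S X Y = α * M.g X Y)) := by
  have hε0 : ε ≠ 0 := by rcases hε with rfl | rfl <;> norm_num
  obtain rfl | rfl | hn : n = 0 ∨ n = 1 ∨ 2 ≤ n := by omega
  · rw [M.eq_zero_of_dim_zero ξ, M.g_zero_left] at hξ
    exact absurd hξ.symm hε0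
  · have hflat (a₀ a₁ a₂ a₃ a₄ a₅ a₆ a₇ : ℝ) :
        (∀ X Y : M.V, M.T a₀ a₁ a₂ a₃ a₄ a₅ a₆ a₇ X Y ξ = 0) ↔ M.IsEinstein :=
      iff_of_true (fun X Y => M.T_eq_zero_of_R_eq_zero M.R_eq_zero_of_dim_one _ _ _ _ _ _ _ _ X Y ξ)
        (M.isEinstein_of_R_eq_zero M.R_eq_zero_of_dim_one)
    exact ⟨fun _ _ _ _ => hflat .., hflat .., hflat ..⟩
  have hn0 : (n : ℝ) ≠ 0 := by positivity
  have hn1 : (n : ℝ) - 1 ≠ 0 := by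
    have : (2 : ℝ) ≤ n := by exact_mod_cast hn
    linarith
  refine ⟨fun b₀ b₁ hb₁ hb => hk.xi_flat_iff_isEinstein hξ hε0 ?_ rfl rfl hb₁ ?_,
    hk.xi_flat_iff_isEinstein hξ hε0 ?_ (neg_neg _).symm (neg_neg _).symm ?_ ?_,
    hk.xi_flat_iff_isEinstein hξ hε0 ?_ neg_zero.symm (neg_neg _).symm ?_ ?_⟩
  · field_simp
    ring
  · have hcoeff : b₁ + (n - 1) * -((1 / n) * (b₀ / (n - 1) + 2 * b₁)) = -(b₀ + (n - 2) * b₁) / n := by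
      field_simp
      ring
    rw [hcoeff]
    exact div_ne_zero (neg_ne_zero.mpr hb) hn0
  · field_simp
    ring
  · simp [hn1]
  · simp [hn1]
  · field_simp
    ring
  · simp [hn1]
  · simp [hn1]

/-- For the quasi-conformal tensor `𝒞₊` (with `a₁ ≠ 0` and
`a₀+(n−2)a₁ ≠ 0`), the `ℳ`-projective tensor and the `𝒲₂`-tensor, an
`(N(k),ξ)`-semi-Riemannian manifold is `ξ`-`𝒯_a`-flat iff it is Einstein. -/
theorem xi_Ta_flat_iff_Einstein
    (n : ℕ) (M : SemiRiemannian n) (k ε : ℝ) (ξ : M.V) (η : M.V → ℝ)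
    (hε : ε = 1 ∨ ε = -1) (hξ : M.g ξ ξ = ε)
    (hη : ∀ X : M.V, η X = ε * M.g X ξ)
    (hk : M.Nullity k ξ) :
    (∀ b₀ b₁ : ℝ, b₁ ≠ 0 → b₀ + ((n : ℝ) - 2) * b₁ ≠ 0 →
      ((∀ X Y : M.V,
          M.T b₀ b₁ (-b₁) 0 b₁ (-b₁) 0 (-((1/(n : ℝ)) * (b₀/((n : ℝ) - 1) + 2*b₁))) X Y ξ = 0)
        ↔ (∃ α : ℝ, ∀ X Y : M.V, M.S X Y = α * M.g X Y)))
    ∧ ((∀ X Y : M.V, M.T 1 (-(1/(2*((n : ℝ) - 1)))) (1/(2*((n : ℝ) - 1))) 0 (-(1/(2*((n : ℝ) - 1)))) (1/(2*((n : ℝ) - 1))) 0 0 X Y ξ = 0)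
        ↔ (∃ α : ℝ, ∀ X Y : M.V, M.S X Y = α * M.g X Y))
    ∧ ((∀ X Y : M.V, M.T 1 0 0 0 (-(1/((n : ℝ) - 1))) (1/((n : ℝ) - 1)) 0 0 X Y ξ = 0)
        ↔ (∃ α : ℝ, ∀ X Y : M.V, M.S X Y = α * M.g X Y)) :=
  xi_Ta_flat_iff_Einstein_general n M k ε ξ hε hξ hk
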